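/- Let a = (a_1, …, a_n) be a nonempty list of even integers with |a_1| ≥ 4, |a_i| ≥ 2 for all i, and such that no two consecutive entries both have absolute value 2. Then d([a]) = n. -/

import Mathlib

/-- The continued fraction value `[a₁, …, aₙ] = 1/(a₁ + 1/(a₂ + ⋯ + 1/aₙ))` of a
list of integers, defined recursively with `[] = 0`, using the total division of `ℚ`. -/
def cfVal : List ℤ → ℚ
  | [] => 0
  | a :: l => 1 / ((a : ℚ) + cfVal l)

/-- `u` and `v` are the two Farey parents of `x`: there are integers `a, b, c, d` with
`1 ≤ b, d`, `b + d = q`, `a + c = p`, `a·d − b·c = ±1`, `u = a/b` and `v = c/d`,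
where `x = p/q` in lowest terms. -/
def IsFareyParents (x u v : ℚ) : Prop :=
  ∃ a b c d : ℤ, 1 ≤ b ∧ 1 ≤ d ∧ b + d = (x.den : ℤ) ∧ a + c = x.num ∧
    (a * d - b * c = 1 ∨ a * d - b * c = -1) ∧
    u = (a : ℚ) / (b : ℚ) ∧ v = (c : ℚ) / (d : ℚ)

/-- The graph of the depth function on `ℚ`: integers have depth `0`, and otherwise
`d(x) = 1 + min(d(u), d(v))` where `u, v` are the two Farey parents of `x`. -/
inductive DepthRel : ℚ → ℕ → Prop
  | int (x : ℚ) (h : x.den = 1) : DepthRel x 0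
  | step (x u v : ℚ) (m k : ℕ) (h : x.den ≠ 1) (hp : IsFareyParents x u v)
      (hu : DepthRel u m) (hv : DepthRel v k) : DepthRel x (1 + min m k)

/-- The depth `d(x)` of a rational number. -/
noncomputable def fareyDepth (x : ℚ) : ℕ := sInf {n | DepthRel x n}

/-!
For `|a| ≥ 2` the map `y ↦ 1 / (a + y)` carries Farey parents in `[-1, 1]` to Farey parents, and
`1 / c` has the parents `0` and `1 / (c - sign c)`; hence the parents of `[p, c]` are `[p]` and
`[p, c - sign c]`. Farey parents are unique up to order, so `DepthRel` is the graph of a function.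

For admissible `p` and any `|c| ≥ 2`, induction on `∑ |aᵢ|` gives `d([p, c]) = |p| + 1`, except
that a tail `b, -b` with `|b| = 2` gives `|p|`. Indeed the parent `[p]` has depth `|p|`, and for
`|c| ≥ 3` the other parent has depth at least `|p|`. For `|c| = 2` the other parent is
`[q, b, ±1] = [q, b ± 1]`; as `b` is even, `|b ± 1| ≥ 3` unless `b = -c`, and then
`[q, ∓1] = [r, f ∓ 1]` with `|f| ≥ 4`, of depth `|q|`.
-/

lemma isFareyParents_of_eq_mediant {x : ℚ} {a b c d : ℤ} (hb : 1 ≤ b) (hd : 1 ≤ d)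
    (hdet : a * d - b * c = 1 ∨ a * d - b * c = -1)
    (hx : x = ((a + c : ℤ) : ℚ) / ((b + d : ℤ) : ℚ)) :
    IsFareyParents x (a / b) (c / d) := by
  have hcop : IsCoprime (a + c) (b + d) := by
    rcases hdet with h | h
    · exact ⟨d, -c, by linear_combination h⟩
    · exact ⟨-d, c, by linear_combination -h⟩
  have hcop' : (a + c).natAbs.Coprime (b + d).natAbs := Int.isCoprime_iff_gcd_eq_one.mp hcop
  have hpos : 0 < b + d := by omega
  refine ⟨a, b, c, d, hb, hd, ?_, ?_, hdet, rfl, rfl⟩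
  · rw [hx, Rat.den_div_eq_of_coprime hpos hcop']
  · rw [hx, Rat.num_div_eq_of_coprime hpos hcop']

lemma IsFareyParents.two_le_den {x u v : ℚ} (h : IsFareyParents x u v) : 2 ≤ x.den := by
  obtain ⟨a, b, c, d, hb, hd, hbd, -⟩ := h
  omega

lemma eq_of_mul_den_sub_mul_num_eq {x : ℚ} {A B A' B' : ℤ} (hB : 1 ≤ B) (hBx : B < x.den)
    (hB' : 1 ≤ B') (hB'x : B' < x.den)
    (h : A * x.den - B * x.num = A' * x.den - B' * x.num) : A = A' ∧ B = B' := by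
  have hcop : IsCoprime (x.den : ℤ) x.num := by
    rw [Int.isCoprime_iff_gcd_eq_one]; exact x.reduced.symm
  have hdvd : (x.den : ℤ) ∣ B - B' :=
    hcop.dvd_of_dvd_mul_right ⟨A - A', by linear_combination -h⟩
  obtain rfl : B = B' := by
    have := Int.eq_zero_of_abs_lt_dvd hdvd (by rw [abs_lt]; omega)
    omega
  refine ⟨mul_right_cancel₀ (by positivity : (x.den : ℤ) ≠ 0) (by linarith), rfl⟩

lemma IsFareyParents.eq_or_eq_swap {x u v u' v' : ℚ} (h : IsFareyParents x u v)
    (h' : IsFareyParents x u' v') : (u = u' ∧ v = v') ∨ (u = v' ∧ v = u') := by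
  obtain ⟨A, B, C, D, hB, hD, hBD, hAC, hdet, rfl, rfl⟩ := h
  obtain ⟨A', B', C', D', hB', hD', hBD', hAC', hdet', rfl, rfl⟩ := h'
  have key : ∀ {A B A' B' : ℤ}, 1 ≤ B → B < x.den → 1 ≤ B' → B' < x.den →
      A * x.den - B * x.num = A' * x.den - B' * x.num → (A : ℚ) / B = A' / B' := by
    intro A B A' B' h₁ h₂ h₃ h₄ h
    obtain ⟨rfl, rfl⟩ := eq_of_mul_den_sub_mul_num_eq h₁ h₂ h₃ h₄ h
    rfl
  -- a parent `a / b` is pinned down by `a * den - b * num = ±(a * d - b * c)`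
  have eA : A * x.den - B * x.num = A * D - B * C := by rw [← hBD, ← hAC]; ring
  have eC : C * x.den - D * x.num = -(A * D - B * C) := by rw [← hBD, ← hAC]; ring
  have eA' : A' * x.den - B' * x.num = A' * D' - B' * C' := by rw [← hBD', ← hAC']; ring
  have eC' : C' * x.den - D' * x.num = -(A' * D' - B' * C') := by rw [← hBD', ← hAC']; ring
  rcases hdet with h | h <;> rcases hdet' with h' | h' <;>
    first
    | exact Or.inl ⟨key hB (by omega) hB' (by omega) (by linarith),
        key hD (by omega) hD' (by omega) (by linarith)⟩
    | exact Or.inr ⟨key hB (by omega) hD' (by omega) (by linarith),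
        key hD (by omega) hB' (by omega) (by linarith)⟩

lemma DepthRel.unique {x : ℚ} {m n : ℕ} (hm : DepthRel x m) (hn : DepthRel x n) : m = n := by
  induction hm generalizing n with
  | int x h => cases hn with
    | int => rfl
    | step _ _ _ _ _ h' => exact absurd h h'
  | step x u v m k h hp hu hv ihu ihv => cases hn with
    | int _ h' => exact absurd h' h
    | step _ u' v' m' k' _ hp' hu' hv' =>
      rcases hp.eq_or_eq_swap hp' with ⟨rfl, rfl⟩ | ⟨rfl, rfl⟩
      · rw [ihu hu', ihv hv']
      · rw [ihu hv', ihv hu', Nat.min_comm]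

lemma DepthRel.fareyDepth_eq {x : ℚ} {n : ℕ} (h : DepthRel x n) : fareyDepth x = n := by
  have hset : {m | DepthRel x m} = {n} :=
    Set.ext fun m => ⟨fun hm => hm.unique h, fun hm => hm ▸ h⟩
  rw [fareyDepth, hset, csInf_singleton]

lemma DepthRel.intCast (n : ℤ) : DepthRel n 0 := .int _ (Rat.den_intCast n)

lemma DepthRel.of_isFareyParents {x u v : ℚ} {m k n : ℕ} (hp : IsFareyParents x u v)
    (hu : DepthRel u m) (hv : DepthRel v k) (hn : 1 + min m k = n) : DepthRel x n :=
  hn ▸ .step x u v m k (by have := hp.two_le_den; omega) hp hu hv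

@[simp] lemma cfVal_nil : cfVal [] = 0 := rfl

@[simp] lemma cfVal_cons (a : ℤ) (l : List ℤ) : cfVal (a :: l) = 1 / (a + cfVal l) := rfl

lemma DepthRel.cfVal_nil : DepthRel (cfVal []) 0 := .int _ rfl

lemma cfVal_singleton_of_abs_eq_one {e : ℤ} (he : |e| = 1) : cfVal [e] = e := by
  rcases (abs_eq zero_le_one).mp he with rfl | rfl <;> norm_num

lemma cfVal_append_pair_of_abs_eq_one (t : List ℤ) (b : ℤ) {e : ℤ} (he : |e| = 1) :
    cfVal (t ++ [b, e]) = cfVal (t ++ [b + e]) := by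
  induction t with
  | nil => simp [cfVal_singleton_of_abs_eq_one he]
  | cons a t ih => simp [ih]

lemma abs_one_div_add_le_one {K : Type*} [Field K] [LinearOrder K] [IsStrictOrderedRing K]
    {a y : K} (h : 1 + |y| ≤ |a|) : |1 / (a + y)| ≤ 1 := by
  rw [abs_one_div]
  exact div_le_one_of_le₀ (by linarith [abs_sub_abs_le_abs_add a y]) (abs_nonneg _)

lemma abs_cfVal_le_one {l : List ℤ} (hl : ∀ a ∈ l, 2 ≤ |a|) : |cfVal l| ≤ 1 := by
  induction l with
  | nil => simp
  | cons a l ih =>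
    rw [List.forall_mem_cons] at hl
    have ha : (2 : ℚ) ≤ |(a : ℚ)| := by exact_mod_cast hl.1
    exact abs_one_div_add_le_one (by linarith [ih hl.2])

lemma abs_cfVal_append_le_one {l : List ℤ} {c : ℤ} (hl : ∀ a ∈ l, 2 ≤ |a|) (hc : 1 ≤ |c|) :
    |cfVal (l ++ [c])| ≤ 1 := by
  induction l with
  | nil =>
    have hc' : (1 : ℚ) ≤ |(c : ℚ)| := by exact_mod_cast hc
    exact abs_one_div_add_le_one (by simpa using hc')
  | cons a l ih =>
    rw [List.forall_mem_cons] at hl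
    have ha : (2 : ℚ) ≤ |(a : ℚ)| := by exact_mod_cast hl.1
    rw [List.cons_append, cfVal_cons]
    exact abs_one_div_add_le_one (by linarith [ih hl.2])

lemma ne_zero_of_two_le_abs {a : ℤ} (ha : 2 ≤ |a|) : a ≠ 0 := by
  rintro rfl; norm_num at ha

lemma abs_sub_sign_of_ne_zero {c : ℤ} (hc : c ≠ 0) : |c - c.sign| = |c| - 1 := by
  rcases hc.lt_or_gt with h | h
  · rw [Int.sign_eq_neg_one_of_neg h, abs_of_neg h, abs_of_nonpos (by omega : c - -1 ≤ 0)]; ring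
  · rw [Int.sign_eq_one_of_pos h, abs_of_pos h, abs_of_nonneg (by omega : (0 : ℤ) ≤ c - 1)]

lemma abs_le_of_abs_div_le_one {A B : ℤ} (hB : 1 ≤ B) (h : |(A : ℚ) / B| ≤ 1) : |A| ≤ B := by
  rw [abs_div, abs_of_pos (by exact_mod_cast hB : (0 : ℚ) < B), div_le_one (by positivity)] at h
  exact_mod_cast h

lemma one_div_intCast_add_div {a A B : ℤ} (ha : 2 ≤ |a|) (hB : 1 ≤ B) (hAB : |A| ≤ B) :
    1 ≤ a.sign * (a * B + A) ∧
      1 / ((a : ℚ) + A / B) = ((a.sign * B : ℤ) : ℚ) / ((a.sign * (a * B + A) : ℤ) : ℚ) := by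
  have hσ : |a.sign| = 1 := Int.abs_sign_of_ne_zero (ne_zero_of_two_le_abs ha)
  have hσA : -B ≤ a.sign * A := by
    have : |a.sign * A| ≤ B := by rwa [abs_mul, hσ, one_mul]
    exact (abs_le.mp this).1
  have hpos : 1 ≤ a.sign * (a * B + A) := by nlinarith [Int.sign_mul_self_eq_abs a]
  refine ⟨hpos, ?_⟩
  have hσ₀ : (a.sign : ℚ) ≠ 0 := Int.cast_ne_zero.mpr fun h => by simp [h] at hσ
  have hB' : (B : ℚ) ≠ 0 := by positivity
  have hden : (a : ℚ) * B + A ≠ 0 := by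
    exact_mod_cast right_ne_zero_of_mul (by positivity : a.sign * (a * B + A) ≠ 0)
  push_cast
  rw [mul_div_mul_left _ _ hσ₀]
  field_simp

lemma IsFareyParents.one_div_intCast_add {y u v : ℚ} (h : IsFareyParents y u v) {a : ℤ}
    (ha : 2 ≤ |a|) (hu : |u| ≤ 1) (hv : |v| ≤ 1) :
    IsFareyParents (1 / (a + y)) (1 / (a + u)) (1 / (a + v)) := by
  obtain ⟨A, B, C, D, hB, hD, hBD, hAC, hdet, rfl, rfl⟩ := h
  have hAB := abs_le_of_abs_div_le_one hB hu
  have hCD := abs_le_of_abs_div_le_one hD hv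
  obtain ⟨hu₁, hu₂⟩ := one_div_intCast_add_div ha hB hAB
  obtain ⟨hv₁, hv₂⟩ := one_div_intCast_add_div ha hD hCD
  obtain ⟨-, hy⟩ := one_div_intCast_add_div ha (by omega : 1 ≤ B + D)
    ((abs_add_le A C).trans (add_le_add hAB hCD))
  have hσ : a.sign * a.sign = 1 := by
    rw [← abs_mul_self, abs_mul, Int.abs_sign_of_ne_zero (ne_zero_of_two_le_abs ha), one_mul]
  rw [hu₂, hv₂]
  refine isFareyParents_of_eq_mediant hu₁ hv₁ ?_ ?_
  · rcases hdet with h | h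
    · right; linear_combination (B * C - A * D) * hσ - h
    · left; linear_combination (B * C - A * D) * hσ - h
  · have hy' : y = ((A + C : ℤ) : ℚ) / ((B + D : ℤ) : ℚ) := by
      rw [hAC, hBD, Int.cast_natCast, Rat.num_div_den]
    rw [hy', hy]
    push_cast
    ring

lemma isFareyParents_cfVal_singleton {c : ℤ} (hc : 2 ≤ |c|) :
    IsFareyParents (cfVal [c]) (cfVal []) (cfVal [c - c.sign]) := by
  simp only [cfVal_cons, cfVal_nil, add_zero]
  rcases (ne_zero_of_two_le_abs hc).lt_or_gt with h | h
  · rw [abs_of_neg h] at hc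
    rw [Int.sign_eq_neg_one_of_neg h]
    convert isFareyParents_of_eq_mediant (x := 1 / c) (a := 0) (b := 1) (c := -1) (d := -c - 1)
      le_rfl (by omega) (by norm_num) (by push_cast; ring) using 1
    · simp
    · push_cast
      rw [show -(c : ℚ) - 1 = -(c - -1) by ring, neg_div_neg_eq]
  · rw [abs_of_pos h] at hc
    rw [Int.sign_eq_one_of_pos h]
    convert isFareyParents_of_eq_mediant (x := 1 / c) (a := 0) (b := 1) (c := 1) (d := c - 1)
      le_rfl (by omega) (by norm_num) (by push_cast; ring) using 1
    · simp
    · push_cast; ring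

lemma isFareyParents_cfVal_append {p : List ℤ} {c : ℤ} (hp : ∀ a ∈ p, 2 ≤ |a|)
    (hc : 2 ≤ |c|) :
    IsFareyParents (cfVal (p ++ [c])) (cfVal p) (cfVal (p ++ [c - c.sign])) := by
  induction p with
  | nil => exact isFareyParents_cfVal_singleton hc
  | cons a p ih =>
    rw [List.forall_mem_cons] at hp
    have hc' : 1 ≤ |c - c.sign| := by
      rw [abs_sub_sign_of_ne_zero (ne_zero_of_two_le_abs hc)]; omega
    exact (ih hp.2).one_div_intCast_add hp.1 (abs_cfVal_le_one hp.2)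
      (abs_cfVal_append_le_one hp.2 hc')

lemma depthRel_cfVal_singleton {c : ℤ} (hc : 2 ≤ |c|) : DepthRel (cfVal [c]) 1 := by
  have hcs := abs_sub_sign_of_ne_zero (ne_zero_of_two_le_abs hc)
  obtain ⟨k, hk⟩ : ∃ k, DepthRel (cfVal [c - c.sign]) k := by
    by_cases hc2 : |c| = 2
    · rw [cfVal_singleton_of_abs_eq_one (by omega)]
      exact ⟨0, DepthRel.intCast _⟩
    · exact ⟨1, depthRel_cfVal_singleton (by omega)⟩
  exact DepthRel.of_isFareyParents (isFareyParents_cfVal_singleton hc) DepthRel.cfVal_nil hk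
    (by simp)
termination_by c.natAbs
decreasing_by simp only [Int.abs_eq_natAbs] at *; omega

lemma three_le_abs_add_of_even {b e : ℤ} (hb : Even b) (hb2 : 2 ≤ |b|) (he : |e| = 1)
    (hbe : b ≠ -2 * e) : 3 ≤ |b + e| := by
  obtain ⟨k, rfl⟩ := hb
  simp only [abs_eq_max_neg] at *
  omega

def IsAdmissible (l : List ℤ) : Prop :=
  (∀ a ∈ l, Even a ∧ 2 ≤ |a|) ∧ l.IsChain (fun a b => ¬(|a| = 2 ∧ |b| = 2))

namespace IsAdmissible

variable {l q : List ℤ} {b : ℤ}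

lemma two_le_abs (h : IsAdmissible l) : ∀ a ∈ l, 2 ≤ |a| := fun a ha => (h.1 a ha).2

lemma of_append {l' : List ℤ} (h : IsAdmissible (l ++ l')) : IsAdmissible l :=
  ⟨fun a ha => h.1 a (List.mem_append_left _ ha), h.2.left_of_append⟩

lemma four_le_abs_of_getLast? (h : IsAdmissible (q ++ [b])) (hb : |b| = 2) {f : ℤ}
    (hf : q.getLast? = some f) : 4 ≤ |f| := by
  have hf2 : |f| ≠ 2 := fun hf2 => (List.isChain_append.mp h.2).2.2 f hf b rfl ⟨hf2, hb⟩
  obtain ⟨⟨k, rfl⟩, hk⟩ := h.1 f (List.mem_append_left _ (List.mem_of_getLast? hf))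
  simp only [abs_eq_max_neg] at hk hf2 ⊢
  omega

lemma not_exceptional (h : IsAdmissible (q ++ [b])) : ¬(|b| = 2 ∧ q.getLast? = some (-b)) :=
  fun ⟨hb, hq⟩ => by have := h.four_le_abs_of_getLast? hb hq; rw [abs_neg] at this; omega

end IsAdmissible

theorem depthRel_cfVal_append {p : List ℤ} {c : ℤ} (hp : IsAdmissible p) (hc : 2 ≤ |c|) :
    DepthRel (cfVal (p ++ [c]))
      (if |c| = 2 ∧ p.getLast? = some (-c) then p.length else p.length + 1) := by
  rcases List.eq_nil_or_concat' p with rfl | ⟨q, b, rfl⟩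
  · simpa using depthRel_cfVal_singleton hc
  have hq := hp.of_append
  have hb : 2 ≤ |b| := hp.two_le_abs b (by simp)
  have hu : DepthRel (cfVal (q ++ [b])) (q.length + 1) := by
    simpa [hp.not_exceptional] using depthRel_cfVal_append hq hb
  have hparents := isFareyParents_cfVal_append hp.two_le_abs hc
  have hcs := abs_sub_sign_of_ne_zero (ne_zero_of_two_le_abs hc)
  by_cases hc2 : |c| = 2
  · have hce : c = 2 * (c - c.sign) := by
      rcases (abs_eq (by norm_num)).mp hc2 with rfl | rfl <;> rfl
    set e := c - c.sign
    have he : |e| = 1 := by omega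
    rw [List.append_assoc q [b] [e], List.singleton_append,
      cfVal_append_pair_of_abs_eq_one q b he] at hparents
    by_cases hbc : b = -c
    · have hv : DepthRel (cfVal (q ++ [b + e])) q.length := by
        rw [show b + e = -e by omega]
        have he' : |-e| = 1 := by rwa [abs_neg]
        rcases List.eq_nil_or_concat' q with rfl | ⟨r, f, rfl⟩
        · rw [List.nil_append, cfVal_singleton_of_abs_eq_one he']
          exact DepthRel.intCast _
        have hf := hp.four_le_abs_of_getLast? (by rw [hbc, abs_neg, hc2]) (f := f) (by simp)
        have hfe : 3 ≤ |f + -e| := by linarith [abs_sub_abs_le_abs_add f (-e)]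
        have := depthRel_cfVal_append hq.of_append (by omega : 2 ≤ |f + -e|)
        rw [if_neg (by omega)] at this
        rw [List.append_assoc, List.singleton_append, cfVal_append_pair_of_abs_eq_one r f he']
        simpa using this
      rw [if_pos ⟨hc2, by simp [hbc]⟩]
      exact DepthRel.of_isFareyParents hparents hu hv (by simp; omega)
    · have hbe := three_le_abs_add_of_even (hp.1 b (by simp)).1 hb he (by omega)
      have hv := depthRel_cfVal_append hq (by omega : 2 ≤ |b + e|)
      rw [if_neg (by omega)] at hv
      rw [if_neg (by simp [hbc])]
      exact DepthRel.of_isFareyParents hparents hu hv (by simp; omega)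
  · have hv := depthRel_cfVal_append hp (by omega : 2 ≤ |c - c.sign|)
    rw [if_neg (by tauto)]
    split_ifs at hv <;> exact DepthRel.of_isFareyParents hparents hu hv (by simp; omega)
termination_by (p.map Int.natAbs).sum + c.natAbs
decreasing_by
  all_goals
    subst_vars
    rw [Int.abs_eq_natAbs] at hc
    simp only [List.map_append, List.sum_append, List.map_cons, List.map_nil, List.sum_cons,
      List.sum_nil, Int.abs_eq_natAbs] at *
    omega

theorem IsAdmissible.depthRel_cfVal {l : List ℤ} (h : IsAdmissible l) :
    DepthRel (cfVal l) l.length := by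
  rcases List.eq_nil_or_concat' l with rfl | ⟨q, b, rfl⟩
  · exact DepthRel.cfVal_nil
  · simpa [h.not_exceptional] using depthRel_cfVal_append h.of_append (h.two_le_abs b (by simp))

theorem stmt13_general (L : List ℤ) (hev : ∀ a ∈ L, Even a ∧ 2 ≤ |a|)
    (h2 : List.Chain' (fun a b => ¬(|a| = 2 ∧ |b| = 2)) L) :
    fareyDepth (cfVal L) = L.length :=
  (IsAdmissible.depthRel_cfVal ⟨hev, h2⟩).fareyDepth_eq

/-- If `a = (a₁, …, aₙ)` is a nonempty list of even integers with `|a₁| ≥ 4`,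
`|aᵢ| ≥ 2` for all `i`, and no two consecutive entries both of absolute value `2`,
then `d([a]) = n`. -/
theorem stmt13 (L : List ℤ) (hL : L ≠ []) (hev : ∀ a ∈ L, Even a ∧ 2 ≤ |a|)
    (h1 : 4 ≤ |L.head hL|)
    (h2 : List.Chain' (fun a b => ¬(|a| = 2 ∧ |b| = 2)) L) :
    fareyDepth (cfVal L) = L.length :=
  stmt13_general L hev h2
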